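/- arXiv:2308.01150 — 2 statements merged into one kernel-verified Lean document; each statement's English description precedes it below -/
import Mathlib

section
/- Let α > 0 and let y₁, y₂ ∈ ℕ with y₁ ≤ α < y₂. Then -y₁y₂ + α(y₁+y₂) - α² ≥ d(1-d), where d = α - ⌊α⌋. That is, among all two-point distributions on non-negative integers with mean α, the variance is minimized when y₁ = ⌊α⌋ and y₂ = ⌊α⌋ + 1, and the minimum variance equals d(1-d). -/
/-! The variance factors as `(α - y₁) * (y₂ - α)`. Integrality forces `y₁ ≤ ⌊α⌋` and
`⌊α⌋ + 1 ≤ y₂`, so the two factors dominate `d` and `1 - d` respectively. -/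

theorem Int.fract_mul_one_sub_fract_le {R : Type*} [Ring R] [LinearOrder R]
    [IsStrictOrderedRing R] [FloorRing R] {x : R} {m n : ℤ} (hm : (m : R) ≤ x)
    (hn : x < n) :
    Int.fract x * (1 - Int.fract x) ≤ (x - m) * (n - x) := by
  have hm_floor : (m : R) ≤ ⌊x⌋ := Int.cast_le.2 (Int.le_floor.2 hm)
  have hn_floor : (⌊x⌋ : R) + 1 ≤ n := by exact_mod_cast Int.floor_lt.2 hn
  rw [Int.fract]
  refine mul_le_mul (sub_le_sub_left hm_floor x) ?_ ?_ (sub_nonneg.2 hm)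
  · rw [sub_sub_eq_add_sub, add_comm 1]
    exact sub_le_sub_right hn_floor x
  · exact sub_nonneg.2 (Int.fract_lt_one x).le

theorem two_point_variance_ge_general (α : ℝ) (y₁ y₂ : ℕ)
    (h1 : (y₁ : ℝ) ≤ α) (h2 : α < (y₂ : ℝ)) :
    Int.fract α * (1 - Int.fract α)
      ≤ -(y₁ : ℝ) * (y₂ : ℝ) + α * ((y₁ : ℝ) + (y₂ : ℝ)) - α ^ 2 := by
  calc Int.fract α * (1 - Int.fract α) ≤ (α - y₁) * (y₂ - α) :=
        Int.fract_mul_one_sub_fract_le (m := y₁) (n := y₂)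
          (by simpa using h1) (by simpa using h2)
    _ = -(y₁ : ℝ) * (y₂ : ℝ) + α * ((y₁ : ℝ) + (y₂ : ℝ)) - α ^ 2 := by ring

/-- Among all two-point distributions on {y₁, y₂} ⊆ ℕ with mean α (y₁ ≤ α < y₂),
the variance -y₁y₂ + α(y₁+y₂) - α² is at least d(1-d) where d = α - ⌊α⌋,
with the minimum attained at y₁ = ⌊α⌋, y₂ = ⌊α⌋ + 1. -/
theorem two_point_variance_ge (α : ℝ) (hα : 0 < α) (y₁ y₂ : ℕ)
    (h1 : (y₁ : ℝ) ≤ α) (h2 : α < (y₂ : ℝ)) :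
    Int.fract α * (1 - Int.fract α)
      ≤ -(y₁ : ℝ) * (y₂ : ℝ) + α * ((y₁ : ℝ) + (y₂ : ℝ)) - α ^ 2 :=
  two_point_variance_ge_general α y₁ y₂ h1 h2
end

section
/- For any α > 0 and β > 0 with β ≥ d(1-d) where d = α - ⌊α⌋, there exists a random variable X taking values in the non-negative integers with E[X] = α and Var(X) = β. -/
private lemma summable_ite_pair (φ : ℕ → ℝ) (i j : ℕ) (x y : ℝ) :
    Summable (fun n : ℕ => φ n * (if n = i then x else if n = j then y else 0)) := by
  apply summable_of_ne_finset_zero (s := ({i, j} : Finset ℕ))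
  intro n hn
  simp only [Finset.mem_insert, Finset.mem_singleton, not_or] at hn
  simp [hn.1, hn.2]

private lemma tsum_ite_pair (φ : ℕ → ℝ) {i j : ℕ} (hij : i ≠ j) (x y : ℝ) :
    ∑' n : ℕ, φ n * (if n = i then x else if n = j then y else 0) = φ i * x + φ j * y := by
  rw [tsum_eq_sum (s := ({i, j} : Finset ℕ)) (by
    intro n hn
    simp only [Finset.mem_insert, Finset.mem_singleton, not_or] at hn
    simp [hn.1, hn.2])]
  rw [Finset.sum_insert (by simp [hij]), Finset.sum_singleton]
  simp [hij, Ne.symm hij]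

private lemma tsum_mix (φ : ℕ → ℝ) (s u : ℝ) {i j k l : ℕ} (hij : i ≠ j) (hkl : k ≠ l)
    (x y z w : ℝ) :
    ∑' n : ℕ, φ n * (s * (if n = i then x else if n = j then y else 0) +
      u * (if n = k then z else if n = l then w else 0)) =
      s * (φ i * x + φ j * y) + u * (φ k * z + φ l * w) := by
  have hrw : (fun n : ℕ => φ n * (s * (if n = i then x else if n = j then y else 0) +
      u * (if n = k then z else if n = l then w else 0))) =
      fun n : ℕ => s * (φ n * (if n = i then x else if n = j then y else 0)) +
        u * (φ n * (if n = k then z else if n = l then w else 0)) := by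
    funext n; ring
  rw [hrw, Summable.tsum_add ((summable_ite_pair φ i j x y).mul_left s)
      ((summable_ite_pair φ k l z w).mul_left u),
    tsum_mul_left, tsum_mul_left, tsum_ite_pair φ hij, tsum_ite_pair φ hkl]

/-- For any α > 0 and β > 0 with β ≥ d(1-d), where d = α - ⌊α⌋ is the fractional
part of α, there exists an ℕ-valued random variable with mean α and variance β. -/
theorem exists_nat_rv_mean_var (α β : ℝ) (hα : 0 < α) (hβ : 0 < β)
    (h : Int.fract α * (1 - Int.fract α) ≤ β) :
    ∃ μ : PMF ℕ, (∑' n : ℕ, (n : ℝ) * (μ n).toReal) = α ∧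
      (∑' n : ℕ, ((n : ℝ) - α) ^ 2 * (μ n).toReal) = β := by
  set d : ℝ := Int.fract α with hd
  have hd0 : 0 ≤ d := Int.fract_nonneg α
  have hd1 : d < 1 := Int.fract_lt_one α
  have hfloor : 0 ≤ ⌊α⌋ := Int.floor_nonneg.2 hα.le
  set a : ℕ := ⌊α⌋.toNat with ha
  have haR : (a : ℝ) = α - d := by
    have : ((a : ℤ) : ℝ) = ((⌊α⌋ : ℤ) : ℝ) := by
      norm_cast
      exact Int.toNat_of_nonneg hfloor
    push_cast at this
    rw [this, hd, Int.fract]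
    ring
  obtain ⟨N, hN⟩ := exists_nat_gt (α + β / α)
  have hNα : α < (N : ℝ) := lt_of_le_of_lt (le_add_of_nonneg_right (by positivity)) hN
  have hN0 : (0 : ℝ) < N := hα.trans hNα
  have hNne : (N : ℝ) ≠ 0 := ne_of_gt hN0
  have hNpos : 0 < N := by exact_mod_cast hN0
  set v₂ : ℝ := α * ((N : ℝ) - α) with hv₂def
  have hβv₂ : β < v₂ := by
    have h1 : β / α < (N : ℝ) - α := by linarith
    have h2 : α * (β / α) < α * ((N : ℝ) - α) := mul_lt_mul_of_pos_left h1 hα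
    have h3 : α * (β / α) = β := by field_simp
    rw [h3] at h2
    exact h2
  set v₁ : ℝ := d * (1 - d) with hv₁def
  have hv₁β : v₁ ≤ β := h
  have hvv : 0 < v₂ - v₁ := by linarith
  set t : ℝ := (β - v₁) / (v₂ - v₁) with htdef
  have ht0 : 0 ≤ t := div_nonneg (by linarith) hvv.le
  have ht1 : t ≤ 1 := by
    rw [htdef, div_le_one hvv]; linarith
  have htv : t * (v₂ - v₁) = β - v₁ := div_mul_cancel₀ _ (ne_of_gt hvv)
  have hαN1 : α / N ≤ 1 := (div_le_one hN0).2 hNα.le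
  have hαN0 : 0 ≤ α / N := by positivity
  set f : ℕ → ℝ := fun n =>
    (1 - t) * (if n = a then 1 - d else if n = a + 1 then d else 0) +
      t * (if n = 0 then 1 - α / N else if n = N then α / N else 0) with hf
  have hfnn : ∀ n, 0 ≤ f n := by
    intro n
    have h1 : (0:ℝ) ≤ (if n = a then 1 - d else if n = a + 1 then d else 0) := by
      split_ifs <;> linarith
    have h2 : (0:ℝ) ≤ (if n = 0 then 1 - α / N else if n = N then α / N else 0) := by
      split_ifs <;> linarith
    have g1 := mul_nonneg (by linarith : (0:ℝ) ≤ 1 - t) h1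
    have g2 := mul_nonneg ht0 h2
    simp only [hf]
    linarith
  have hsum : Summable f := by
    apply summable_of_ne_finset_zero (s := ({a, a + 1, 0, N} : Finset ℕ))
    intro n hn
    simp only [Finset.mem_insert, Finset.mem_singleton, not_or] at hn
    simp [hf, hn.1, hn.2.1, hn.2.2.1, hn.2.2.2]
  have key : ∀ φ : ℕ → ℝ, ∑' n, φ n * f n =
      (1 - t) * (φ a * (1 - d) + φ (a + 1) * d) +
        t * (φ 0 * (1 - α / N) + φ N * (α / N)) := by
    intro φ
    simp only [hf]
    exact tsum_mix φ (1 - t) t (by omega : a ≠ a + 1) hNpos.ne (1 - d) d (1 - α / N) (α / N)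
  have hone : ∑' n, f n = 1 := by
    have hk := key (fun _ => 1)
    simp only [one_mul] at hk
    rw [hk]; ring
  have hmean : ∑' n : ℕ, (n : ℝ) * f n = α := by
    have hk := key (fun n => (n : ℝ))
    rw [hk]
    push_cast
    rw [haR]
    have hNα' : (N : ℝ) * (α / N) = α := by field_simp
    rw [hNα']
    ring
  have hvar : ∑' n : ℕ, ((n : ℝ) - α) ^ 2 * f n = β := by
    have hk := key (fun n => ((n : ℝ) - α) ^ 2)
    rw [hk]
    push_cast
    rw [haR]
    have hg2 : ((0:ℝ) - α) ^ 2 * (1 - α / N) + ((N : ℝ) - α) ^ 2 * (α / N) = v₂ := by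
      rw [hv₂def]; field_simp; ring
    rw [hg2]
    have hg1 : (α - d - α) ^ 2 * (1 - d) + (α - d + 1 - α) ^ 2 * d = v₁ := by
      rw [hv₁def]; ring
    rw [hg1]
    linear_combination htv
  have hmem : HasSum (fun n => ENNReal.ofReal (f n)) 1 := by
    rw [ENNReal.summable.hasSum_iff, ← ENNReal.ofReal_tsum_of_nonneg hfnn hsum, hone,
      ENNReal.ofReal_one]
  set μ : PMF ℕ := ⟨fun n => ENNReal.ofReal (f n), hmem⟩ with hμ
  have happ : ∀ m : ℕ, (μ m).toReal = f m := fun m => by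
    show (ENNReal.ofReal (f m)).toReal = f m
    exact ENNReal.toReal_ofReal (hfnn m)
  exact ⟨μ, by simp only [happ]; exact hmean, by simp only [happ]; exact hvar⟩
end
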